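/- arXiv:2012.09274 — 5 statements merged into one kernel-verified Lean document; each statement's English description precedes it below -/
import Mathlib

section
/- If M is a MUS of an unsatisfiable knowledge base KB and C is an MCS of KB, then M ∩ C is nonempty. -/
/-- An interpretation assigns Boolean values to propositional variables. -/
abbrev Interp := ℕ → Bool
/-- A formula is identified with its semantics: the set of interpretations satisfying it. -/
abbrev Form := Interp → Prop

/-- An interpretation satisfies a set of formulas (interpreted conjunctively). -/
def Satisfies (i : Interp) (S : Set Form) : Prop := ∀ f ∈ S, f i
/-- A set of formulas is satisfiable. -/
def Sat (S : Set Form) : Prop := ∃ i, Satisfies i S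
/-- Classical entailment: every model of S is a model of φ. -/
def Entails (S : Set Form) (φ : Form) : Prop := ∀ i, Satisfies i S → φ i
/-- Negation of a formula. -/
def FNeg (φ : Form) : Form := fun i => ¬ φ i
/-- Minimal unsatisfiable subset of KB. -/
def IsMUS (KB M : Set Form) : Prop := M ⊆ KB ∧ ¬ Sat M ∧ ∀ M' ⊂ M, Sat M'
/-- Minimal correction set of KB. -/
def IsMCS (KB C : Set Form) : Prop := C ⊆ KB ∧ Sat (KB \ C) ∧ ∀ C' ⊂ C, ¬ Sat (KB \ C')
/-- H hits every member of Γ. -/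
def HittingSet (Γ : Set (Set Form)) (H : Set Form) : Prop := ∀ S ∈ Γ, (H ∩ S).Nonempty
/-- Minimal hitting set (under inclusion). -/
def MinHittingSet (Γ : Set (Set Form)) (H : Set Form) : Prop :=
  HittingSet Γ H ∧ ∀ H' ⊂ H, ¬ HittingSet Γ H'
/-- ε is a support for φ from KB: inclusion-minimal subset of KB entailing φ. -/
def IsSupport (KB : Set Form) (φ : Form) (ε : Set Form) : Prop :=
  ε ⊆ KB ∧ Entails ε φ ∧ ∀ ε' ⊂ ε, ¬ Entails ε' φ

theorem Sat.mono {S T : Set Form} (hST : S ⊆ T) (hT : Sat T) : Sat S :=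
  let ⟨i, hi⟩ := hT
  ⟨i, fun f hf => hi f (hST hf)⟩

theorem stmt3_general (KB M C : Set Form)
    (hM : IsMUS KB M) (hC : IsMCS KB C) : (M ∩ C).Nonempty := by
  by_contra hdisj
  have hM_sub : M ⊆ KB \ C := fun f hf => ⟨hM.1 hf, fun hfC => hdisj ⟨f, hf, hfC⟩⟩
  exact hM.2.1 (hC.2.1.mono hM_sub)

/-- Every MUS intersects every MCS. -/
theorem stmt3 (KB M C : Set Form) (hfin : KB.Finite) (hunsat : ¬ Sat KB)
    (hM : IsMUS KB M) (hC : IsMCS KB C) : (M ∩ C).Nonempty :=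
  stmt3_general KB M C hM hC
end

section
/- If H is a hitting set of the collection of all MCSes of an unsatisfiable finite knowledge base KB, then H (viewed as a conjunction) is unsatisfiable. -/
/-!
If `i` satisfies `H`, the formulas of `KB` falsified by `i` form a correction set, which, `KB`
being finite, contains an MCS. `H` hits that MCS in a formula both true and false under `i`.
-/

lemma isMCS_of_minimal {KB C : Set Form} (h : Minimal (fun C => C ⊆ KB ∧ Sat (KB \ C)) C) :
    IsMCS KB C :=
  ⟨h.prop.1, h.prop.2, fun _ hC' hsat =>
    hC'.not_ge (h.le_of_le ⟨hC'.subset.trans h.prop.1, hsat⟩ hC'.subset)⟩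

lemma exists_isMCS_subset {KB D : Set Form} (hfin : KB.Finite) (hsat : Sat (KB \ D)) :
    ∃ C ⊆ D, IsMCS KB C := by
  have hfinite : {C | C ⊆ KB ∧ Sat (KB \ C)}.Finite := hfin.finite_subsets.subset fun _ h => h.1
  have hKBD : KB ∩ D ⊆ KB ∧ Sat (KB \ (KB ∩ D)) :=
    ⟨Set.inter_subset_left, by rwa [Set.sdiff_self_inter]⟩
  obtain ⟨C, hC_sub, hmin⟩ := hfinite.exists_le_minimal hKBD
  exact ⟨C, hC_sub.trans Set.inter_subset_right, isMCS_of_minimal hmin⟩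

lemma sat_diff_setOf_not (KB : Set Form) (i : Interp) : Sat (KB \ {f | ¬ f i}) :=
  ⟨i, fun _ hf => not_not.1 hf.2⟩

theorem stmt6_general (KB H : Set Form) (hfin : KB.Finite)
    (hhit : HittingSet {C | IsMCS KB C} H) : ¬ Sat H := by
  rintro ⟨i, hi⟩
  obtain ⟨C, hC_false, hC⟩ := exists_isMCS_subset hfin (sat_diff_setOf_not KB i)
  obtain ⟨f, hfH, hfC⟩ := hhit C hC
  exact hC_false hfC (hi f hfH)

/-- Any hitting set of the collection of all MCSes of an unsatisfiable KB is unsatisfiable. -/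
theorem stmt6 (KB H : Set Form) (hfin : KB.Finite) (hunsat : ¬ Sat KB)
    (hsub : H ⊆ KB) (hhit : HittingSet {C | IsMCS KB C} H) : ¬ Sat H :=
  stmt6_general KB H hfin hhit
end

section
/- Let 𝓗 be a subset of the collection of all MCSes of an unsatisfiable finite knowledge base KB, and let h be a minimum-cardinality hitting set of 𝓗. If the subformula induced by h is unsatisfiable, then h is a smallest MUS (SMUS) of KB, i.e., h is a MUS and no MUS of KB has smaller cardinality. -/
/-!
Every unsatisfiable subset of `KB` meets every MCS, because the complement of an MCS in `KB` is
satisfiable. Hence every MUS is a hitting set of `𝓗`, so no MUS is smaller than `h`; and an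
unsatisfiable proper subset of `h` would be a hitting set smaller than `h`, so `h` is a MUS.
-/

theorem Sat.anti {S T : Set Form} (hST : S ⊆ T) : Sat T → Sat S
  | ⟨i, hi⟩ => ⟨i, fun f hf => hi f (hST hf)⟩

theorem inter_nonempty_of_not_sat {KB S C : Set Form} (hS : S ⊆ KB) (hSu : ¬ Sat S)
    (hC : Sat (KB \ C)) : (S ∩ C).Nonempty := by
  by_contra hdisj
  exact hSu (Sat.anti (T := KB \ C) (fun f hf => ⟨hS hf, fun hfC => hdisj ⟨f, hf, hfC⟩⟩) hC)

theorem hittingSet_of_not_sat {KB S : Set Form} {𝓗 : Set (Set Form)}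
    (h𝓗 : ∀ C ∈ 𝓗, Sat (KB \ C)) (hS : S ⊆ KB) (hSu : ¬ Sat S) : HittingSet 𝓗 S :=
  fun C hC => inter_nonempty_of_not_sat hS hSu (h𝓗 C hC)

theorem stmt8_general (KB h : Set Form) (𝓗 : Set (Set Form)) (hfin : KB.Finite)
    (h𝓗 : 𝓗 ⊆ {C | IsMCS KB C}) (hsub : h ⊆ KB)
    (hmin : ∀ h' ⊆ KB, HittingSet 𝓗 h' → h.ncard ≤ h'.ncard)
    (hhu : ¬ Sat h) :
    IsMUS KB h ∧ ∀ M, IsMUS KB M → h.ncard ≤ M.ncard := by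
  have hits : ∀ S ⊆ KB, ¬ Sat S → HittingSet 𝓗 S :=
    fun S => hittingSet_of_not_sat fun C hC => (h𝓗 hC).2.1
  refine ⟨⟨hsub, hhu, fun h' hh' => ?_⟩, fun M hM => hmin M hM.1 (hits M hM.1 hM.2.1)⟩
  by_contra hh'u
  have hh'KB : h' ⊆ KB := hh'.subset.trans hsub
  exact (hmin h' hh'KB (hits h' hh'KB hh'u)).not_gt (Set.ncard_lt_ncard hh' (hfin.subset hsub))

/-- A minimum-cardinality hitting set of a subcollection of the MCSes of KB which is itself
unsatisfiable is a smallest MUS of KB. -/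
theorem stmt8 (KB h : Set Form) (𝓗 : Set (Set Form)) (hfin : KB.Finite) (hunsat : ¬ Sat KB)
    (h𝓗 : 𝓗 ⊆ {C | IsMCS KB C}) (hsub : h ⊆ KB)
    (hhit : HittingSet 𝓗 h)
    (hmin : ∀ h' ⊆ KB, HittingSet 𝓗 h' → h.ncard ≤ h'.ncard)
    (hhu : ¬ Sat h) :
    IsMUS KB h ∧ ∀ M, IsMUS KB M → h.ncard ≤ M.ncard :=
  stmt8_general KB h 𝓗 hfin h𝓗 hsub hmin hhu
end

section
/- Suppose seed ⊆ KB is such that seed ∪ {¬φ} is satisfiable, where KB ⊨ φ. Then there exists an MCS C of KB ∪ {¬φ} (with ¬φ hard, i.e., C ⊆ KB) such that seed ⊆ (KB ∪ {¬φ}) \ C, and in particular seed ∩ C = ∅. -/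
theorem exists_minimal_correction_subset {T D : Set Form} (hD : D.Finite) (hsat : Sat (T \ D)) :
    ∃ C ⊆ D, Sat (T \ C) ∧ ∀ C' ⊂ C, ¬ Sat (T \ C') := by
  have hfin : {C | C ⊆ D ∧ Sat (T \ C)}.Finite := hD.finite_subsets.subset fun _ hC => hC.1
  obtain ⟨C, -, hC⟩ := hfin.exists_le_minimal ⟨subset_rfl, hsat⟩
  exact ⟨C, hC.prop.1, hC.prop.2, fun C' hC' hsat' =>
    hC.not_prop_of_lt hC' ⟨hC'.subset.trans hC.prop.1, hsat'⟩⟩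

theorem stmt16_general (KB seed : Set Form) (φ : Form) (hfin : KB.Finite)
    (hsub : seed ⊆ KB) (hsat : Sat (seed ∪ {FNeg φ})) :
    ∃ C ⊆ KB, (Sat ((KB ∪ {FNeg φ}) \ C) ∧ ∀ C' ⊂ C, ¬ Sat ((KB ∪ {FNeg φ}) \ C')) ∧
      seed ⊆ (KB ∪ {FNeg φ}) \ C ∧ seed ∩ C = ∅ := by
  have hcorr : (KB ∪ {FNeg φ}) \ (KB \ seed) ⊆ seed ∪ {FNeg φ} := by
    rintro f ⟨hf | hf, hfKB⟩
    · exact Or.inl (not_not.mp fun hfs => hfKB ⟨hf, hfs⟩)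
    · exact Or.inr hf
  obtain ⟨C, hCD, hCsat, hCmin⟩ :=
    exists_minimal_correction_subset (hfin.sdiff (t := seed)) (hsat.mono hcorr)
  have hdisj : Disjoint seed C := Set.disjoint_sdiff_right.mono_right hCD
  exact ⟨C, hCD.trans Set.sdiff_subset, ⟨hCsat, hCmin⟩,
    Set.subset_sdiff.mpr ⟨hsub.trans Set.subset_union_left, hdisj⟩,
    Set.disjoint_iff_inter_eq_empty.mp hdisj⟩

/-- A seed consistent with ¬φ can always be extended to the complement of an MCS of
KB ∪ {¬φ} with ¬φ hard. -/
theorem stmt16 (KB seed : Set Form) (φ : Form) (hfin : KB.Finite) (hent : Entails KB φ)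
    (hsub : seed ⊆ KB) (hsat : Sat (seed ∪ {FNeg φ})) :
    ∃ C ⊆ KB, (Sat ((KB ∪ {FNeg φ}) \ C) ∧ ∀ C' ⊂ C, ¬ Sat ((KB ∪ {FNeg φ}) \ C')) ∧
      seed ⊆ (KB ∪ {FNeg φ}) \ C ∧ seed ∩ C = ∅ :=
  stmt16_general KB seed φ hfin hsub hsat
end

section
/- Let KB be a finite unsatisfiable set of propositional clauses and let h be a minimum-cardinality hitting set of the collection of ALL MCSes of KB. Then h is a smallest MUS of KB: h is unsatisfiable, every proper subset of h is satisfiable, and every MUS of KB has cardinality at least |h|. -/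
/-!
Over a finite KB, a subset S ⊆ KB hits every MCS exactly when it is unsatisfiable: an
unsatisfiable S cannot fit inside the satisfiable complement KB \ C of an MCS C, while a
satisfiable S leaves KB \ S as a correction set, which shrinks to an MCS disjoint from S.
So the hitting sets of the MCSes inside KB are the unsatisfiable subsets of KB, and a
minimum-cardinality one is an unsatisfiable subset all of whose proper subsets are too small
to be unsatisfiable, of size at most that of any MUS.
-/

open Set

lemma hittingSet_isMCS_of_not_sat {KB S : Set Form} (hS : S ⊆ KB) (hunsat : ¬ Sat S) :
    HittingSet {C | IsMCS KB C} S := by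
  intro C hC
  by_contra hdisj
  obtain ⟨i, hi⟩ := hC.2.1
  exact hunsat ⟨i, fun f hf => hi f ⟨hS hf, fun hfC => hdisj ⟨f, hf, hfC⟩⟩⟩

lemma exists_isMCS_disjoint_of_sat {KB S : Set Form} (hfin : KB.Finite) (hS : S ⊆ KB)
    (hsat : Sat S) : ∃ C, IsMCS KB C ∧ Disjoint C S := by
  set corrections := {C | C ⊆ KB \ S ∧ Sat (KB \ C)}
  have hcorr : KB \ S ∈ corrections := by
    refine ⟨subset_rfl, ?_⟩
    rwa [sdiff_sdiff_cancel_left hS]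
  have hfinite : corrections.Finite :=
    (hfin.sdiff.finite_subsets).subset fun C hC => hC.1
  obtain ⟨C, ⟨hCsub, hCsat⟩, hCmin⟩ := hfinite.exists_minimal ⟨_, hcorr⟩
  refine ⟨C, ⟨hCsub.trans sdiff_subset, hCsat, fun C' hC' hC'sat => ?_⟩, ?_⟩
  · exact hC'.2 (hCmin ⟨hC'.1.trans hCsub, hC'sat⟩ hC'.1)
  · exact disjoint_left.mpr fun _ hx => (hCsub hx).2

lemma hittingSet_isMCS_iff_not_sat {KB S : Set Form} (hfin : KB.Finite) (hS : S ⊆ KB) :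
    HittingSet {C | IsMCS KB C} S ↔ ¬ Sat S := by
  refine ⟨fun hhit hsat => ?_, hittingSet_isMCS_of_not_sat hS⟩
  obtain ⟨C, hC, hdisj⟩ := exists_isMCS_disjoint_of_sat hfin hS hsat
  obtain ⟨f, hfS, hfC⟩ := hhit C hC
  exact disjoint_left.mp hdisj hfC hfS

theorem stmt19_general (KB h : Set Form) (hfin : KB.Finite)
    (hsub : h ⊆ KB) (hhit : HittingSet {C | IsMCS KB C} h)
    (hmin : ∀ h' ⊆ KB, HittingSet {C | IsMCS KB C} h' → h.ncard ≤ h'.ncard) :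
    ¬ Sat h ∧ (∀ h' ⊂ h, Sat h') ∧ ∀ M, IsMUS KB M → h.ncard ≤ M.ncard := by
  refine ⟨(hittingSet_isMCS_iff_not_sat hfin hsub).mp hhit, fun h' hh' => ?_,
    fun M hM => hmin M hM.1 (hittingSet_isMCS_of_not_sat hM.1 hM.2.1)⟩
  by_contra hunsat
  have hh'sub : h' ⊆ KB := hh'.1.trans hsub
  have hle := hmin h' hh'sub (hittingSet_isMCS_of_not_sat hh'sub hunsat)
  exact (ncard_lt_ncard hh' (hfin.subset hsub)).not_ge hle

/-- A minimum-cardinality hitting set of the collection of all MCSes of an unsatisfiable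
finite KB is a smallest MUS of KB. -/
theorem stmt19 (KB h : Set Form) (hfin : KB.Finite) (hunsat : ¬ Sat KB)
    (hsub : h ⊆ KB) (hhit : HittingSet {C | IsMCS KB C} h)
    (hmin : ∀ h' ⊆ KB, HittingSet {C | IsMCS KB C} h' → h.ncard ≤ h'.ncard) :
    ¬ Sat h ∧ (∀ h' ⊂ h, Sat h') ∧ ∀ M, IsMUS KB M → h.ncard ≤ M.ncard :=
  stmt19_general KB h hfin hsub hhit hmin
end
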